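/- For any normed BPA system G = (V, Act, R), every A ∈ V and every γ ∈ V*: the set of strings α ∈ V* such that αγ ~ Aγ in L_G and α is a redundancy-free prefix of αγ is nonempty and finite, and every α in this set satisfies |α| ≤ ‖A‖. -/

import Mathlib

/-! Common definitions: labelled transition systems, branching bisimulation,
branching bisimilarity, silent states, class-change norm, BPA systems,
right-to-left finite transducers. -/

/-- A τ-path `t = t₀ →τ t₁ →τ ⋯ →τ t_k` in which every state after `t₀`
is related to `s` by `B`. -/
inductive TauSeq {S Act : Type} (tr : S → Act → S → Prop) (τ : Act)
    (B : S → S → Prop) (s : S) : S → S → Prop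
  | refl (t : S) : TauSeq tr τ B s t t
  | step {t t' t'' : S} : tr t τ t' → B s t' → TauSeq tr τ B s t' t'' →
      TauSeq tr τ B s t t''

/-- `B` is a branching bisimulation in the LTS given by `tr` with silent action `τ`. -/
def IsBranchingBisim {S Act : Type} (tr : S → Act → S → Prop) (τ : Act)
    (B : S → S → Prop) : Prop :=
  ∀ s t, B s t →
    (∀ a s', tr s a s' →
      ((a = τ ∧ B s' t) ∨
        ∃ tk t', TauSeq tr τ B s t tk ∧ tr tk a t' ∧ B s' t')) ∧
    (∀ a t', tr t a t' →
      ((a = τ ∧ B s t') ∨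
        ∃ sk s', TauSeq tr τ (fun u v => B v u) t s sk ∧ tr sk a s' ∧ B s' t'))

/-- Branching bisimilarity: `s ~ t` iff some branching bisimulation contains `(s,t)`. -/
def BBisim {S Act : Type} (tr : S → Act → S → Prop) (τ : Act) (s t : S) : Prop :=
  ∃ B, IsBranchingBisim tr τ B ∧ B s t

/-- `Steps tr s w t`: there is a path from `s` to `t` labelled by the word `w`. -/
inductive Steps {S Act : Type} (tr : S → Act → S → Prop) : S → List Act → S → Prop
  | refl (s : S) : Steps tr s [] s
  | step {s : S} {a : Act} {s' : S} {w : List Act} {t : S} :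
      tr s a s' → Steps tr s' w t → Steps tr s (a :: w) t

/-- A state is silent if only τ-labelled words can be performed from it. -/
def SilentState {S Act : Type} (tr : S → Act → S → Prop) (τ : Act) (s : S) : Prop :=
  ∀ w s', Steps tr s w s' → ∀ a ∈ w, a = τ

/-- A τ-path in which no transition is class-changing (each step stays in the same
`~`-class). -/
inductive TauNC {S Act : Type} (tr : S → Act → S → Prop) (τ : Act) : S → S → Prop
  | refl (t : S) : TauNC tr τ t t
  | step {t t' t'' : S} : tr t τ t' → BBisim tr τ t t' → TauNC tr τ t' t'' →
      TauNC tr τ t t''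

/-- `CCPath tr τ s n t`: there is a path from `s` to `t` containing exactly `n`
class-changing transitions. -/
inductive CCPath {S Act : Type} (tr : S → Act → S → Prop) (τ : Act) : S → ℕ → S → Prop
  | refl (s : S) : CCPath tr τ s 0 s
  | stepEq {s : S} {a : Act} {s' : S} {n : ℕ} {t : S} :
      tr s a s' → BBisim tr τ s s' → CCPath tr τ s' n t → CCPath tr τ s n t
  | stepNe {s : S} {a : Act} {s' : S} {n : ℕ} {t : S} :
      tr s a s' → ¬ BBisim tr τ s s' → CCPath tr τ s' n t → CCPath tr τ s (n + 1) t

/-- The class-change norm: the least number of class-changing transitions on a path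
to a silent state; `⊤` (ω) if no silent state is reachable. -/
noncomputable def ccNorm {S Act : Type} (tr : S → Act → S → Prop) (τ : Act) (s : S) : ℕ∞ :=
  sInf {n : ℕ∞ | ∃ ℓ : ℕ, n = (ℓ : ℕ∞) ∧ ∃ t, CCPath tr τ s ℓ t ∧ SilentState tr τ t}

/-- A BPA system: a finite set of rules `A →a α` (a context-free grammar in
Greibach normal form, no starting variable). -/
structure BPA (V Act : Type) where
  rules : Finset (V × Act × List V)

/-- The transition relation of the LTS `L_G` associated with a BPA system `G`:
`Aβ →a γβ` whenever `A →a γ` is a rule. -/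
def BPA.tr {V Act : Type} (G : BPA V Act) : List V → Act → List V → Prop :=
  fun s a t => ∃ (A : V) (γ β : List V), (A, a, γ) ∈ G.rules ∧ s = A :: β ∧ t = γ ++ β

/-- The (standard, syntactic) norm of a process: the length of a shortest word
leading to the empty process; `⊤` (ω) if there is none. -/
noncomputable def BPA.norm {V Act : Type} (G : BPA V Act) (α : List V) : ℕ∞ :=
  sInf {n : ℕ∞ | ∃ w : List Act, n = (w.length : ℕ∞) ∧ Steps G.tr α w []}

/-- A BPA system is normed if every variable has a finite norm. -/
def BPA.Normed {V Act : Type} (G : BPA V Act) : Prop :=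
  ∀ A : V, G.norm [A] ≠ ⊤

/-- The transition relation of `L_{G,R}`: as `L_G`, but all outgoing transitions of
states in `R*` are removed. -/
def BPA.trR {V Act : Type} (G : BPA V Act) (R : Set V) : List V → Act → List V → Prop :=
  fun s a t => G.tr s a t ∧ ¬ (∀ X ∈ s, X ∈ R)

/-- `R_γ`: the set of variables redundant w.r.t. `γ`, i.e. those `X` with `Xγ ~ γ`. -/
def RedSet {V Act : Type} (G : BPA V Act) (τ : Act) (γ : List V) : Set V :=
  {X : V | BBisim G.tr τ (X :: γ) γ}

/-- `α` is a redundancy-free prefix of `αγ`: it cannot be written as `δXβ` with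
`Xβγ ~ βγ`. -/
def RedFreePrefix {V Act : Type} (G : BPA V Act) (τ : Act) (α γ : List V) : Prop :=
  ¬ ∃ (δ : List V) (X : V) (β : List V),
      α = δ ++ X :: β ∧ BBisim G.tr τ (X :: (β ++ γ)) (β ++ γ)

/-- A finite-state transducer reading (and writing) from right to left. -/
structure Transducer (Q V : Type) where
  delta : Q → V → Q × List V
  q0 : Q

/-- Running the transducer on an input string, right to left:
`T.run α q = (q', β)` means `q' ⇐α|β= q`. -/
def Transducer.run {Q V : Type} (T : Transducer Q V) : List V → Q → Q × List V
  | [], q => (q, [])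
  | A :: α, q =>
      let p := T.run α q
      ((T.delta p.1 A).1, (T.delta p.1 A).2 ++ p.2)

/-- `T_q(α)`: the output of `T` on input `α`, started in state `q`. -/
def Transducer.out {Q V : Type} (T : Transducer Q V) (q : Q) (α : List V) : List V :=
  (T.run α q).2

/-- `q`-normal forms: `ε ∈ NF_q`, and `αA ∈ NF_q` iff `A` is a `q`-prime and
`α` is a `q'`-normal form where `q' ⇐A|A= q`. -/
inductive Transducer.NF {Q V : Type} (T : Transducer Q V) : Q → List V → Prop
  | nil (q : Q) : Transducer.NF T q []
  | snoc {q : Q} {A : V} {α : List V} :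
      (T.delta q A).2 = [A] → Transducer.NF T (T.delta q A).1 α →
      Transducer.NF T q (α ++ [A])

/-- A normal-form-computing (nfc) transducer: each `T_q(A)` is a `q`-normal form,
and `q' ⇐A|γ= q` implies `q' ⇐γ|γ= q`. -/
def Transducer.IsNFC {Q V : Type} (T : Transducer Q V) : Prop :=
  ∀ (q : Q) (A : V),
    Transducer.NF T q (T.delta q A).2 ∧ T.run (T.delta q A).2 q = T.delta q A

/-- A τ-path in `L_G` along which the `T_q`-output stays constant. -/
inductive ConstTauSeq {Q V Act : Type} (tr : List V → Act → List V → Prop) (τ : Act)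
    (T : Transducer Q V) (q : Q) : List V → List V → Prop
  | refl (α : List V) : ConstTauSeq tr τ T q α α
  | step {α α' α'' : List V} : tr α τ α' → T.out q α' = T.out q α →
      ConstTauSeq tr τ T q α' α'' → ConstTauSeq tr τ T q α α''

/-- The long move `α ⇒a_q β`. -/
def BigStep {Q V Act : Type} (G : BPA V Act) (τ : Act) (T : Transducer Q V) (q : Q)
    (α : List V) (a : Act) (β : List V) : Prop :=
  (a = τ ∧ β = T.out q α) ∨
  ∃ αk β', ConstTauSeq G.tr τ T q α αk ∧ G.tr αk a β' ∧ β = T.out q β'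

/-- The equivalence `α₁ ≈_q α₂`: the same long moves are available. -/
def TApprox {Q V Act : Type} (G : BPA V Act) (τ : Act) (T : Transducer Q V) (q : Q)
    (α₁ α₂ : List V) : Prop :=
  ∀ a β, BigStep G τ T q α₁ a β ↔ BigStep G τ T q α₂ a β

/-- Consistency of an nfc-transducer with a BPA system (Definition 4.1). -/
def ConsistentWith {Q V Act : Type} (T : Transducer Q V) (G : BPA V Act) (τ : Act) : Prop :=
  (∀ A : V, T.out T.q0 [A] = [] → TApprox G τ T T.q0 [A] []) ∧
  (∀ (q : Q) (A : V), T.out q [A] ≠ [] → TApprox G τ T q [A] (T.out q [A])) ∧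
  (∀ (q : Q) (A C : V), T.out q [A, C] = [C] → T.out q [C] = [C] →
    TApprox G τ T q [A, C] [C])

/-! Measure a process by its class-change norm `ccNorm`, the least number of class-changing
transitions on a path to a silent state; it is invariant under branching bisimilarity.
If `α` is a redundancy-free prefix of `αγ`, each variable of `α` must be removed by a
class-changing step before the rest can be reached, so `|α| + ccNorm γ ≤ ccNorm (αγ)`.
Conversely `ccNorm (Aγ) ≤ ‖A‖ + ccNorm γ`, and `ccNorm γ` is finite in a normed system, so
`αγ ~ Aγ` gives `|α| ≤ ‖A‖`. A normed variable has a rule, so there are finitely many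
variables and hence finitely many such `α`; `[]` or `[A]` is one of them, according as
`Aγ ~ γ` or not. -/

section LTS

variable {S Act : Type} {tr : S → Act → S → Prop} {τ : Act}

namespace TauSeq

variable {B : S → S → Prop} {s : S}

theorem mono {B' : S → S → Prop} {s' t u : S} (h : TauSeq tr τ B s t u)
    (hB : ∀ x, B s x → B' s' x) : TauSeq tr τ B' s' t u := by
  induction h with
  | refl t => exact .refl t
  | step htr hb _ ih => exact .step htr (hB _ hb) ih

theorem trans {x y z : S} (h₁ : TauSeq tr τ B s x y) (h₂ : TauSeq tr τ B s y z) :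
    TauSeq tr τ B s x z := by
  induction h₁ with
  | refl => exact h₂
  | step htr hb _ ih => exact .step htr hb (ih h₂)

theorem rel_of_rel {x y : S} (h : TauSeq tr τ B s x y) (hx : B s x) : B s y := by
  induction h with
  | refl => exact hx
  | step _ hb _ ih => exact ih hb

theorem eq_or_exists_last {x y : S} (h : TauSeq tr τ B s x y) :
    y = x ∨ ∃ z, TauSeq tr τ B s x z ∧ tr z τ y := by
  induction h with
  | refl => exact .inl rfl
  | @step x x₁ y htr hb _ ih =>
    rcases ih with rfl | ⟨z, hseq, hz⟩
    · exact .inr ⟨x, .refl x, htr⟩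
    · exact .inr ⟨z, .step htr hb hseq, hz⟩

theorem exists_steps {x y : S} (h : TauSeq tr τ B s x y) : ∃ w, Steps tr x w y := by
  induction h with
  | refl t => exact ⟨[], .refl t⟩
  | step htr _ _ ih =>
    obtain ⟨w, hw⟩ := ih
    exact ⟨_, .step htr hw⟩

end TauSeq

def IsBranchingSim (tr : S → Act → S → Prop) (τ : Act) (B : S → S → Prop) : Prop :=
  ∀ s t, B s t → ∀ a s', tr s a s' →
    (a = τ ∧ B s' t) ∨ ∃ tk t', TauSeq tr τ B s t tk ∧ tr tk a t' ∧ B s' t'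

theorem isBranchingBisim_iff {B : S → S → Prop} :
    IsBranchingBisim tr τ B ↔ IsBranchingSim tr τ B ∧ IsBranchingSim tr τ (flip B) :=
  ⟨fun h => ⟨fun s t hst => (h s t hst).1, fun t s hst => (h s t hst).2⟩,
    fun h s t hst => ⟨h.1 s t hst, h.2 t s hst⟩⟩

namespace BBisim

theorem refl (s : S) : BBisim tr τ s s := by
  refine ⟨Eq, fun s t hst => ?_, rfl⟩
  subst hst
  exact ⟨fun a s' h => .inr ⟨s, s', .refl s, h, rfl⟩,
    fun a t' h => .inr ⟨s, t', .refl s, h, rfl⟩⟩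

theorem symm {s t : S} (h : BBisim tr τ s t) : BBisim tr τ t s := by
  obtain ⟨B, hB, hst⟩ := h
  rw [isBranchingBisim_iff] at hB
  exact ⟨flip B, isBranchingBisim_iff.2 ⟨hB.2, hB.1⟩, hst⟩

theorem flip_eq : flip (BBisim tr τ) = BBisim tr τ :=
  funext₂ fun _ _ => propext ⟨symm, symm⟩

theorem isBranchingSim : IsBranchingSim tr τ (BBisim tr τ) := by
  intro s t ⟨B, hB, hst⟩ a s' htr
  rcases (hB s t hst).1 a s' htr with ⟨ha, hb⟩ | ⟨tk, t', hseq, htk, hb⟩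
  · exact .inl ⟨ha, B, hB, hb⟩
  · exact .inr ⟨tk, t', hseq.mono fun x hx => ⟨B, hB, hx⟩, htk, B, hB, hb⟩

theorem transfer_tauSeq {s t t' u : S} (hseq : TauSeq tr τ (BBisim tr τ) s t t')
    (hst : BBisim tr τ s t) (htu : BBisim tr τ t u) :
    ∃ u', TauSeq tr τ (Relation.Comp (BBisim tr τ) (BBisim tr τ)) s u u' ∧
      BBisim tr τ t' u' := by
  induction hseq generalizing u with
  | refl t => exact ⟨u, .refl u, htu⟩
  | @step t t₁ t' htr hst₁ _ ih =>
    rcases isBranchingSim t u htu τ t₁ htr with ⟨_, ht₁u⟩ | ⟨uk, u₁, hseq, hu₁, ht₁u₁⟩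
    · exact ih hst₁ ht₁u
    · obtain ⟨u', hseq', ht'u'⟩ := ih hst₁ ht₁u₁
      exact ⟨u', (hseq.mono fun x hx => ⟨t, hst, hx⟩).trans (.step hu₁ ⟨t₁, hst₁, ht₁u₁⟩ hseq'),
        ht'u'⟩

theorem isBranchingSim_comp :
    IsBranchingSim tr τ (Relation.Comp (BBisim tr τ) (BBisim tr τ)) := by
  intro s u ⟨t, hst, htu⟩ a s' htr
  rcases isBranchingSim s t hst a s' htr with ⟨ha, hs't⟩ | ⟨tk, t', hseq, htk, hs't'⟩
  · exact .inl ⟨ha, t, hs't, htu⟩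
  obtain ⟨v, hv, htkv⟩ := transfer_tauSeq hseq hst htu
  rcases isBranchingSim tk v htkv a t' htk with ⟨rfl, ht'v⟩ | ⟨vk, u', hseq', hvk, ht'u'⟩
  · -- the last τ-step of the path from `u` to `v`, if any, matches `s →τ s'`
    rcases hv.eq_or_exists_last with rfl | ⟨z, hz, hzv⟩
    · exact .inl ⟨rfl, t', hs't', ht'v⟩
    · exact .inr ⟨z, v, hz, hzv, t', hs't', ht'v⟩
  · have hstk : BBisim tr τ s tk := hseq.rel_of_rel hst
    exact .inr ⟨vk, u', hv.trans (hseq'.mono fun x hx => ⟨tk, hstk, hx⟩), hvk, t', hs't', ht'u'⟩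

theorem trans {s t u : S} (h₁ : BBisim tr τ s t) (h₂ : BBisim tr τ t u) : BBisim tr τ s u := by
  refine ⟨_, isBranchingBisim_iff.2 ⟨isBranchingSim_comp, ?_⟩, t, h₁, h₂⟩
  rw [Relation.flip_comp, flip_eq]
  exact isBranchingSim_comp

end BBisim

theorem Steps.append {s t u : S} {w₁ w₂ : List Act} (h₁ : Steps tr s w₁ t)
    (h₂ : Steps tr t w₂ u) : Steps tr s (w₁ ++ w₂) u := by
  induction h₁ with
  | refl => exact h₂
  | step htr _ ih => exact .step htr (ih h₂)

namespace SilentState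

variable {s : S}

theorem of_steps {t : S} {w : List Act} (hs : SilentState tr τ s) (h : Steps tr s w t) :
    SilentState tr τ t :=
  fun w' t' h' a ha => hs (w ++ w') t' (h.append h') a (List.mem_append_right w ha)

theorem eq_of_tr {s' : S} {a : Act} (hs : SilentState tr τ s) (h : tr s a s') : a = τ :=
  hs [a] s' (.step h (.refl s')) a (List.mem_singleton_self a)

theorem of_tr {s' : S} {a : Act} (hs : SilentState tr τ s) (h : tr s a s') :
    SilentState tr τ s' :=
  hs.of_steps (.step h (.refl s'))

theorem of_bbisim {t : S} (hs : SilentState tr τ s) (h : BBisim tr τ t s) :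
    SilentState tr τ t := by
  intro w t' hw
  induction hw generalizing s with
  | refl => simp
  | @step t a t₁ w t' htr _ ih =>
    rw [List.forall_mem_cons]
    rcases BBisim.isBranchingSim t s h a t₁ htr with ⟨ha, h₁⟩ | ⟨sk, s₁, hseq, hsk, h₁⟩
    · exact ⟨ha, ih hs h₁⟩
    · obtain ⟨v, hv⟩ := hseq.exists_steps
      have hsk' := hs.of_steps hv
      exact ⟨hsk'.eq_of_tr hsk, ih (hsk'.of_tr hsk) h₁⟩

theorem bbisim {t : S} (hs : SilentState tr τ s) (ht : SilentState tr τ t) :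
    BBisim tr τ s t := by
  refine ⟨fun x y => SilentState tr τ x ∧ SilentState tr τ y, fun x y ⟨hx, hy⟩ => ?_, hs, ht⟩
  exact ⟨fun a x' h => .inl ⟨hx.eq_of_tr h, hx.of_tr h, hy⟩,
    fun a y' h => .inl ⟨hy.eq_of_tr h, hx, hy.of_tr h⟩⟩

end SilentState

theorem CCPath.append {s t u : S} {m n : ℕ} (h₁ : CCPath tr τ s m t) (h₂ : CCPath tr τ t n u) :
    CCPath tr τ s (m + n) u := by
  induction h₁ with
  | refl => simpa using h₂
  | stepEq htr hb _ ih => exact .stepEq htr hb (ih h₂)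
  | @stepNe s a s' m t htr hb _ ih =>
    rw [Nat.add_right_comm]
    exact .stepNe htr hb (ih h₂)

theorem Steps.exists_ccPath {s t : S} {w : List Act} (h : Steps tr s w t) :
    ∃ m ≤ w.length, CCPath tr τ s m t := by
  induction h with
  | refl s => exact ⟨0, le_rfl, .refl s⟩
  | @step s a s' w t htr _ ih =>
    obtain ⟨m, hm, hp⟩ := ih
    by_cases hb : BBisim tr τ s s'
    · exact ⟨m, hm.trans (Nat.le_succ _), .stepEq htr hb hp⟩
    · exact ⟨m + 1, Nat.succ_le_succ hm, .stepNe htr hb hp⟩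

theorem TauSeq.ccPath_zero {s x y : S} (h : TauSeq tr τ (BBisim tr τ) s x y)
    (hx : BBisim tr τ s x) : CCPath tr τ x 0 y := by
  induction h with
  | refl t => exact .refl t
  | step htr hb _ ih => exact .stepEq htr (hx.symm.trans hb) (ih hb)

theorem CCPath.transfer {s t u : S} {m : ℕ} (h : CCPath tr τ s m u) (hu : SilentState tr τ u)
    (hst : BBisim tr τ s t) : ∃ m' ≤ m, ∃ u', CCPath tr τ t m' u' ∧ SilentState tr τ u' := by
  induction h generalizing t with
  | refl s => exact ⟨0, le_rfl, t, .refl t, hu.of_bbisim hst.symm⟩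
  | stepEq _ hb _ ih => exact ih hu (hb.symm.trans hst)
  | @stepNe s a s' m _ htr _ _ ih =>
    rcases BBisim.isBranchingSim s t hst a s' htr with ⟨_, hs't⟩ | ⟨tk, t', hseq, htk, hs't'⟩
    · obtain ⟨m', hm', hrest⟩ := ih hu hs't
      exact ⟨m', hm'.trans (Nat.le_succ m), hrest⟩
    · obtain ⟨m', hm', u', hp, hu'⟩ := ih hu hs't'
      have hpre : CCPath tr τ t 0 tk := hseq.ccPath_zero hst
      by_cases hc : BBisim tr τ tk t'
      · exact ⟨0 + m', by omega, u', hpre.append (.stepEq htk hc hp), hu'⟩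
      · exact ⟨0 + (m' + 1), by omega, u', hpre.append (.stepNe htk hc hp), hu'⟩

theorem ccNorm_le {s t : S} {m : ℕ} (h : CCPath tr τ s m t) (ht : SilentState tr τ t) :
    ccNorm tr τ s ≤ m :=
  sInf_le ⟨m, rfl, t, h, ht⟩

theorem exists_ccNorm_eq {s : S} (h : ∃ (m : ℕ) (t : S), CCPath tr τ s m t ∧ SilentState tr τ t) :
    ∃ (m : ℕ) (t : S), ccNorm tr τ s = m ∧ CCPath tr τ s m t ∧ SilentState tr τ t := by
  obtain ⟨m, t, hp, ht⟩ := h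
  obtain ⟨m', hm', t', hp', ht'⟩ : ccNorm tr τ s ∈ _ := csInf_mem ⟨m, m, rfl, t, hp, ht⟩
  exact ⟨m', t', hm', hp', ht'⟩

theorem ccNorm_le_length_add {s s' u : S} {w : List Act} {m : ℕ} (hw : Steps tr s w s')
    (hp : CCPath tr τ s' m u) (hu : SilentState tr τ u) : ccNorm tr τ s ≤ w.length + m := by
  obtain ⟨k, hk, hpw⟩ := hw.exists_ccPath (τ := τ)
  calc ccNorm tr τ s ≤ (k + m : ℕ) := ccNorm_le (hpw.append hp) hu
    _ ≤ w.length + m := by exact_mod_cast Nat.add_le_add_right hk m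

theorem BBisim.ccNorm_le {s t : S} (h : BBisim tr τ s t) : ccNorm tr τ t ≤ ccNorm tr τ s := by
  refine le_sInf fun n ⟨ℓ, hn, u, hp, hu⟩ => ?_
  obtain ⟨m, hm, u', hp', hu'⟩ := hp.transfer hu h
  calc ccNorm tr τ t ≤ m := _root_.ccNorm_le hp' hu'
    _ ≤ n := hn ▸ by exact_mod_cast hm

end LTS

section BPA

variable {V Act : Type} {G : BPA V Act} {τ : Act}

namespace BPA

theorem tr_append_right {s t : List V} {a : Act} (h : G.tr s a t) (δ : List V) :
    G.tr (s ++ δ) a (t ++ δ) := by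
  obtain ⟨A, γ, β, hr, rfl, rfl⟩ := h
  exact ⟨A, γ, β ++ δ, hr, rfl, by simp⟩

theorem steps_append_right {s t : List V} {w : List Act} (h : Steps G.tr s w t) (δ : List V) :
    Steps G.tr (s ++ δ) w (t ++ δ) := by
  induction h with
  | refl s => exact .refl _
  | step htr _ ih => exact .step (tr_append_right htr δ) ih

theorem exists_eq_append_of_tr {ρ δ s : List V} {a : Act} (hρ : ρ ≠ [])
    (h : G.tr (ρ ++ δ) a s) : ∃ ρ', s = ρ' ++ δ := by
  obtain ⟨A, γ, β, _, hs, rfl⟩ := h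
  obtain ⟨X, ρ, rfl⟩ := List.exists_cons_of_ne_nil hρ
  obtain ⟨-, rfl⟩ := List.cons_eq_cons.mp hs
  exact ⟨γ ++ ρ, by simp⟩

theorem silentState_nil : SilentState G.tr τ ([] : List V) := by
  rintro w s (_ | ⟨⟨A, γ, β, -, h, -⟩, -⟩) a ha
  · simp at ha
  · simp at h

theorem exists_norm_eq {α : List V} (h : G.norm α ≠ ⊤) :
    ∃ w, G.norm α = w.length ∧ Steps G.tr α w [] := by
  have hne : {n : ℕ∞ | ∃ w : List Act, n = w.length ∧ Steps G.tr α w []}.Nonempty :=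
    Set.nonempty_iff_ne_empty.2 fun he => h (by rw [BPA.norm, he, sInf_empty])
  exact csInf_mem hne

namespace Normed

theorem exists_steps_nil (hG : G.Normed) (α : List V) : ∃ w, Steps G.tr α w [] := by
  induction α with
  | nil => exact ⟨[], .refl []⟩
  | cons A α ih =>
    obtain ⟨w₁, -, hw₁⟩ := exists_norm_eq (hG A)
    obtain ⟨w₂, hw₂⟩ := ih
    exact ⟨w₁ ++ w₂, (steps_append_right hw₁ α).append hw₂⟩

theorem exists_ccPath (hG : G.Normed) (s : List V) :
    ∃ (m : ℕ) (t : List V), CCPath G.tr τ s m t ∧ SilentState G.tr τ t := by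
  obtain ⟨w, hw⟩ := hG.exists_steps_nil s
  obtain ⟨m, -, hp⟩ := hw.exists_ccPath (τ := τ)
  exact ⟨m, [], hp, silentState_nil⟩

theorem finite (hG : G.Normed) : Finite V := by
  have hrule : ∀ A : V, ∃ r ∈ G.rules, r.1 = A := by
    intro A
    obtain ⟨_, -, _ | ⟨⟨A', γ, β, hr, hA, -⟩, -⟩⟩ := exists_norm_eq (hG A)
    exact ⟨(A', _, γ), hr, (List.cons_eq_cons.mp hA).1.symm⟩
  choose r hr hrA using hrule
  refine Finite.of_injective (fun A => (⟨r A, hr A⟩ : G.rules)) fun A B h => ?_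
  simpa only [hrA] using congrArg (fun x : G.rules => x.1.1) h

/-- While the path stays of the form `ρ'δ` with `ρ'δ ≁ δ` it cannot end, since normedness
lets `ρ'δ` reach `δ`; the first class change into `[δ]` leaves a path from a state `~ δ`. -/
theorem ccNorm_add_one_le_of_ccPath (hG : G.Normed) {ρ δ t : List V} {ℓ : ℕ}
    (hp : CCPath G.tr τ (ρ ++ δ) ℓ t) (ht : SilentState G.tr τ t)
    (hnb : ¬ BBisim G.tr τ (ρ ++ δ) δ) : ccNorm G.tr τ δ + 1 ≤ ℓ := by
  generalize hs : ρ ++ δ = s at hp hnb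
  induction hp generalizing ρ with
  | refl s =>
    subst hs
    obtain ⟨w, hw⟩ := hG.exists_steps_nil ρ
    have hδ : SilentState G.tr τ δ := ht.of_steps (by simpa using steps_append_right hw δ)
    exact absurd (ht.bbisim hδ) hnb
  | stepEq htr hb _ ih =>
    have hρ : ρ ≠ [] := by rintro rfl; exact hnb (hs ▸ .refl δ)
    obtain ⟨ρ', rfl⟩ := exists_eq_append_of_tr hρ (hs ▸ htr)
    exact ih ht rfl fun h => hnb (hb.trans h)
  | @stepNe s a s' m u htr _ hp ih =>
    have hρ : ρ ≠ [] := by rintro rfl; exact hnb (hs ▸ .refl δ)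
    obtain ⟨ρ', rfl⟩ := exists_eq_append_of_tr hρ (hs ▸ htr)
    by_cases hs'δ : BBisim G.tr τ (ρ' ++ δ) δ
    · obtain ⟨m', hm', u', hp', hu'⟩ := hp.transfer ht hs'δ
      calc ccNorm G.tr τ δ + 1 ≤ m' + 1 := by gcongr; exact ccNorm_le hp' hu'
        _ ≤ (m + 1 : ℕ) := by exact_mod_cast Nat.succ_le_succ hm'
    · calc ccNorm G.tr τ δ + 1 ≤ m := ih ht rfl hs'δ
        _ ≤ (m + 1 : ℕ) := by exact_mod_cast Nat.le_succ m

theorem ccNorm_add_one_le (hG : G.Normed) {ρ δ : List V} (hnb : ¬ BBisim G.tr τ (ρ ++ δ) δ) :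
    ccNorm G.tr τ δ + 1 ≤ ccNorm G.tr τ (ρ ++ δ) := by
  obtain ⟨m, t, hm, hp, ht⟩ := exists_ccNorm_eq (hG.exists_ccPath (ρ ++ δ))
  exact hm ▸ hG.ccNorm_add_one_le_of_ccPath hp ht hnb

end Normed

end BPA

theorem redFreePrefix_nil (G : BPA V Act) (τ : Act) (γ : List V) : RedFreePrefix G τ [] γ := by
  rintro ⟨δ, X, β, h, -⟩
  simp at h

theorem redFreePrefix_cons {X : V} {β γ : List V} :
    RedFreePrefix G τ (X :: β) γ ↔
      ¬ BBisim G.tr τ (X :: (β ++ γ)) (β ++ γ) ∧ RedFreePrefix G τ β γ := by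
  refine ⟨fun h => ⟨fun hX => h ⟨[], X, β, rfl, hX⟩, ?_⟩, ?_⟩
  · rintro ⟨δ, Y, β', rfl, hY⟩
    exact h ⟨X :: δ, Y, β', rfl, hY⟩
  · rintro ⟨hX, hβ⟩ ⟨_ | ⟨Z, δ⟩, Y, β', h, hY⟩ <;> obtain ⟨rfl, rfl⟩ := List.cons_eq_cons.mp h
    · exact hX hY
    · exact hβ ⟨δ, Y, β', rfl, hY⟩

namespace BPA.Normed

theorem length_add_ccNorm_le (hG : G.Normed) {α γ : List V} (hα : RedFreePrefix G τ α γ) :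
    α.length + ccNorm G.tr τ γ ≤ ccNorm G.tr τ (α ++ γ) := by
  induction α with
  | nil => simp
  | cons X β ih =>
    rw [redFreePrefix_cons] at hα
    calc ((X :: β).length : ℕ∞) + ccNorm G.tr τ γ
        = β.length + ccNorm G.tr τ γ + 1 := by push_cast [List.length_cons]; ring
      _ ≤ ccNorm G.tr τ (β ++ γ) + 1 := by gcongr; exact ih hα.2
      _ ≤ ccNorm G.tr τ ([X] ++ (β ++ γ)) := hG.ccNorm_add_one_le hα.1
      _ = ccNorm G.tr τ (X :: β ++ γ) := rfl

theorem ccNorm_cons_le (hG : G.Normed) (A : V) (γ : List V) :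
    ccNorm G.tr τ (A :: γ) ≤ G.norm [A] + ccNorm G.tr τ γ := by
  obtain ⟨w, hnorm, hw⟩ := exists_norm_eq (hG A)
  obtain ⟨m, u, hm, hp, hu⟩ := exists_ccNorm_eq (hG.exists_ccPath (τ := τ) γ)
  rw [hnorm, hm]
  exact ccNorm_le_length_add (by simpa using steps_append_right hw γ) hp hu

theorem length_le_norm (hG : G.Normed) {A : V} {α γ : List V}
    (hα : BBisim G.tr τ (α ++ γ) (A :: γ)) (hrf : RedFreePrefix G τ α γ) :
    (α.length : ℕ∞) ≤ G.norm [A] := by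
  obtain ⟨m, -, hm, -⟩ := exists_ccNorm_eq (hG.exists_ccPath (τ := τ) γ)
  have hγ : ccNorm G.tr τ γ ≠ ⊤ := hm ▸ ENat.natCast_ne_top m
  refine (ENat.add_le_add_iff_right hγ).1 ?_
  calc α.length + ccNorm G.tr τ γ ≤ ccNorm G.tr τ (α ++ γ) := hG.length_add_ccNorm_le hrf
    _ ≤ ccNorm G.tr τ (A :: γ) := hα.symm.ccNorm_le
    _ ≤ G.norm [A] + ccNorm G.tr τ γ := hG.ccNorm_cons_le A γ

end BPA.Normed

end BPA

/-- the set of strings `α` with `αγ ~ Aγ` that are redundancy-free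
prefixes of `αγ` is nonempty and finite, and each such `α` has `|α| ≤ ‖A‖`. -/
theorem candidate_decompositions_nonempty_finite {V Act : Type} (G : BPA V Act)
    (τ : Act) (hG : G.Normed) (A : V) (γ : List V) :
    {α : List V | BBisim G.tr τ (α ++ γ) (A :: γ) ∧ RedFreePrefix G τ α γ}.Nonempty ∧
    {α : List V | BBisim G.tr τ (α ++ γ) (A :: γ) ∧ RedFreePrefix G τ α γ}.Finite ∧
    (∀ α : List V, BBisim G.tr τ (α ++ γ) (A :: γ) → RedFreePrefix G τ α γ →
      (α.length : ℕ∞) ≤ G.norm [A]) := by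
  refine ⟨?_, ?_, fun α => hG.length_le_norm⟩
  · by_cases hA : BBisim G.tr τ (A :: γ) γ
    · exact ⟨[], hA.symm, redFreePrefix_nil G τ γ⟩
    · exact ⟨[A], .refl _, redFreePrefix_cons.2 ⟨hA, redFreePrefix_nil G τ γ⟩⟩
  · have := hG.finite
    obtain ⟨w, hnorm, -⟩ := BPA.exists_norm_eq (hG A)
    refine (List.finite_length_le V w.length).subset fun α ⟨hα, hrf⟩ => ?_
    exact_mod_cast hnorm ▸ hG.length_le_norm hα hrf
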